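/- arXiv:math/0402203 — 3 statements merged into one kernel-verified Lean document; each statement's English description precedes it below -/
import Mathlib

section
/- Let W ⊆ ℝⁿ be compact, T > 0, and f : [0,T] × W → ℝ be continuous in w and smooth in t up to the boundary. Suppose there is M ∈ ℕ such that for each w ∈ W, every zero of t ↦ f(t,w) has order at most M (i.e., at each zero some t-derivative of order ≤ M is nonzero). Then there exist C > 0 and ε₀ > 0 such that for all 0 < ε < ε₀, sup over w ∈ W of the Lebesgue measure of {t ∈ [0,T] : |f(t,w)| ≤ ε} is at most C·ε^(1/(2M)). -/
open MeasureTheory Set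


lemma vol_le_of_pairwise {E : Set ℝ} {d : ℝ}
    (h : ∀ s ∈ E, ∀ t ∈ E, |t - s| ≤ d) : volume E ≤ ENNReal.ofReal d := by
  refine (Real.volume_le_diam E).trans ?_
  refine EMetric.diam_le fun x hx y hy => ?_
  rw [edist_dist, Real.dist_eq]
  exact ENNReal.ofReal_le_ofReal (h y hy x hx)

lemma mvt_lower {h : ℝ → ℝ} (hd : Differentiable ℝ h) {J : Set ℝ} (hJ : Convex ℝ J)
    {c : ℝ} (hlow : ∀ t ∈ J, c ≤ |deriv h t|) {s t : ℝ} (hs : s ∈ J) (ht : t ∈ J) :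
    c * |t - s| ≤ |h t - h s| := by
  rcases lt_trichotomy s t with hlt | rfl | hlt
  · obtain ⟨ξ, hξ, hξ'⟩ := exists_hasDerivAt_eq_slope h (deriv h) hlt
      (hd.continuous.continuousOn) (fun x _ => (hd x).hasDerivAt)
    have hξJ : ξ ∈ J := hJ.ordConnected.out hs ht ⟨hξ.1.le, hξ.2.le⟩
    have h2 : h t - h s = deriv h ξ * (t - s) :=
      ((eq_div_iff (sub_ne_zero.mpr hlt.ne')).mp hξ').symm
    rw [h2, abs_mul]
    exact mul_le_mul_of_nonneg_right (hlow ξ hξJ) (abs_nonneg _)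
  · simp
  · obtain ⟨ξ, hξ, hξ'⟩ := exists_hasDerivAt_eq_slope h (deriv h) hlt
      (hd.continuous.continuousOn) (fun x _ => (hd x).hasDerivAt)
    have hξJ : ξ ∈ J := hJ.ordConnected.out ht hs ⟨hξ.1.le, hξ.2.le⟩
    have h2 : h s - h t = deriv h ξ * (s - t) :=
      ((eq_div_iff (sub_ne_zero.mpr hlt.ne')).mp hξ').symm
    have h3 : h t - h s = deriv h ξ * (t - s) := by ring_nf; ring_nf at h2; linarith
    rw [h3, abs_mul]
    exact mul_le_mul_of_nonneg_right (hlow ξ hξJ) (abs_nonneg _)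

lemma sublevel_bound (g : ℝ → ℝ) (hg : ContDiff ℝ (⊤ : ℕ∞) g) :
    ∀ (j : ℕ) (J : Set ℝ), Convex ℝ J → ∀ c ε : ℝ, 0 < c → 0 < ε →
    (∀ t ∈ J, c ≤ |iteratedDeriv (j+1) g t|) →
    volume {t ∈ J | |g t| ≤ ε} ≤
      ENNReal.ofReal (((2:ℝ)^(j+2) - 2) * (ε/c) ^ ((1:ℝ)/(j+1))) := by
  intro j
  induction j with
  | zero =>
    intro J hJ c ε hc hε hlow
    have hlow' : ∀ t ∈ J, c ≤ |deriv g t| := by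
      simpa [iteratedDeriv_one] using hlow
    have hd : Differentiable ℝ g := by
      have := hg.differentiable_iteratedDeriv 0 (by exact_mod_cast lt_top_iff_ne_top.2 (by simp))
      rwa [iteratedDeriv_zero] at this
    have hpair : ∀ s ∈ {t ∈ J | |g t| ≤ ε}, ∀ t ∈ {t ∈ J | |g t| ≤ ε},
        |t - s| ≤ 2*ε/c := by
      intro s hs t ht
      have h1 := mvt_lower hd hJ hlow' hs.1 ht.1
      have h2 : |g t - g s| ≤ 2*ε := by
        calc |g t - g s| ≤ |g t| + |g s| := abs_sub _ _
        _ ≤ 2*ε := by linarith [hs.2, ht.2]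
      rw [le_div_iff₀ hc]
      nlinarith [abs_nonneg (t - s)]
    refine (vol_le_of_pairwise hpair).trans (ENNReal.ofReal_le_ofReal ?_)
    have : ((1:ℝ)/((0:ℕ)+1)) = 1 := by norm_num
    rw [this, Real.rpow_one]
    norm_num [mul_div_assoc]
  | succ j IH =>
    intro J hJ c ε hc hε hlow
    set N : ℝ := (j : ℝ) with hN
    have hN0 : (0:ℝ) ≤ N := Nat.cast_nonneg j
    set α : ℝ := 1/(N+2) with hα
    have hx : (0:ℝ) < ε/c := div_pos hε hc
    set δ : ℝ := c * (ε/c) ^ α with hδdef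
    have hδ : 0 < δ := mul_pos hc (Real.rpow_pos_of_pos hx α)
    set h : ℝ → ℝ := iteratedDeriv (j+1) g with hh
    have hder : deriv h = iteratedDeriv (j+2) g := (iteratedDeriv_succ).symm
    have hdh : Differentiable ℝ h :=
      hg.differentiable_iteratedDeriv (j+1) (by exact_mod_cast lt_top_iff_ne_top.2 (by simp))
    have hlow' : ∀ t ∈ J, c ≤ |deriv h t| := by
      intro t ht; rw [hder]; exact hlow t ht
    set S : Set ℝ := {t ∈ J | |h t| ≤ δ} with hS
    -- diameter of S
    have hSpair : ∀ s ∈ S, ∀ t ∈ S, |t - s| ≤ 2*δ/c := by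
      intro s hs t ht
      have h1 := mvt_lower hdh hJ hlow' hs.1 ht.1
      have h2 : |h t - h s| ≤ 2*δ := by
        calc |h t - h s| ≤ |h t| + |h s| := abs_sub _ _
        _ ≤ 2*δ := by linarith [hs.2, ht.2]
      rw [le_div_iff₀ hc]
      nlinarith [abs_nonneg (t - s)]
    -- the three pieces
    set J₁ : Set ℝ := J ∩ ⋂ s ∈ S, Iio s with hJ₁
    set J₂ : Set ℝ := J ∩ ⋂ s ∈ S, Ioi s with hJ₂
    set Mid : Set ℝ := {t ∈ J | (∃ s ∈ S, s ≤ t) ∧ (∃ s ∈ S, t ≤ s)} with hMid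
    have hJ₁c : Convex ℝ J₁ :=
      hJ.inter (convex_iInter fun s => convex_iInter fun _ => convex_Iio s)
    have hJ₂c : Convex ℝ J₂ :=
      hJ.inter (convex_iInter fun s => convex_iInter fun _ => convex_Ioi s)
    have hnotS : ∀ t ∈ J, t ∉ S → δ ≤ |h t| := by
      intro t htJ htS
      by_contra hcon
      exact htS ⟨htJ, le_of_not_gt (fun hlt => hcon (le_of_lt hlt))⟩
    have hJ₁low : ∀ t ∈ J₁, δ ≤ |iteratedDeriv (j+1) g t| := by
      intro t ht
      refine hnotS t ht.1 (fun htS => ?_)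
      have := mem_iInter₂.1 ht.2 t htS
      exact lt_irrefl t this
    have hJ₂low : ∀ t ∈ J₂, δ ≤ |iteratedDeriv (j+1) g t| := by
      intro t ht
      refine hnotS t ht.1 (fun htS => ?_)
      have := mem_iInter₂.1 ht.2 t htS
      exact lt_irrefl t this
    have hB₁ := IH J₁ hJ₁c δ ε hδ hε hJ₁low
    have hB₂ := IH J₂ hJ₂c δ ε hδ hε hJ₂low
    have hMidpair : ∀ s ∈ {t ∈ Mid | |g t| ≤ ε}, ∀ t ∈ {t ∈ Mid | |g t| ≤ ε},
        |t - s| ≤ 2*δ/c := by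
      rintro s ⟨⟨_, ⟨s₁, hs₁, hs₁le⟩, ⟨s₂, hs₂, hs₂le⟩⟩, _⟩
        t ⟨⟨_, ⟨t₁, ht₁, ht₁le⟩, ⟨t₂, ht₂, ht₂le⟩⟩, _⟩
      have d1 := hSpair s₁ hs₁ t₂ ht₂
      have d2 := hSpair t₁ ht₁ s₂ hs₂
      rw [abs_le] at *
      constructor <;> nlinarith
    have hMidvol : volume {t ∈ Mid | |g t| ≤ ε} ≤ ENNReal.ofReal (2*δ/c) :=
      vol_le_of_pairwise hMidpair
    -- covering
    have hcover : {t ∈ J | |g t| ≤ ε} ⊆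
        {t ∈ J₁ | |g t| ≤ ε} ∪ {t ∈ Mid | |g t| ≤ ε} ∪ {t ∈ J₂ | |g t| ≤ ε} := by
      rintro t ⟨htJ, htε⟩
      by_cases h₁ : ∃ s ∈ S, s ≤ t
      · by_cases h₂ : ∃ s ∈ S, t ≤ s
        · exact Or.inl (Or.inr ⟨⟨htJ, h₁, h₂⟩, htε⟩)
        · push_neg at h₂
          refine Or.inr ⟨⟨htJ, ?_⟩, htε⟩
          exact mem_iInter₂.2 fun s hs => h₂ s hs
      · push_neg at h₁
        refine Or.inl (Or.inl ⟨⟨htJ, ?_⟩, htε⟩)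
        exact mem_iInter₂.2 fun s hs => h₁ s hs
    -- key exponent computation : (ε/δ)^(1/(j+1)) = (ε/c)^α
    have hεδ : ε/δ = (ε/c) ^ ((1:ℝ) - α) := by
      rw [Real.rpow_sub hx, Real.rpow_one, hδdef]
      field_simp
    have hexp : (ε/δ) ^ ((1:ℝ)/(j+1)) = (ε/c) ^ α := by
      rw [hεδ, ← Real.rpow_mul hx.le]
      congr 1
      rw [hα]
      have h1 : N + 1 ≠ 0 := by positivity
      have h2 : N + 2 ≠ 0 := by positivity
      field_simp
      ring
    have hxα : (0:ℝ) ≤ (ε/c) ^ α := (Real.rpow_pos_of_pos hx α).le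
    have h2nn : (0:ℝ) ≤ (2:ℝ)^(j+2) - 2 := by
      have : (2:ℝ)^1 ≤ 2^(j+2) := pow_le_pow_right₀ one_le_two (by omega)
      simpa using this
    have hδc : 2*δ/c = 2 * (ε/c) ^ α := by
      rw [hδdef]; field_simp
    have hA : (0:ℝ) ≤ ((2:ℝ)^(j+2) - 2) * (ε/δ) ^ ((1:ℝ)/(N+1)) := by
      rw [hexp]; positivity
    calc volume {t ∈ J | |g t| ≤ ε}
        ≤ volume ({t ∈ J₁ | |g t| ≤ ε} ∪ {t ∈ Mid | |g t| ≤ ε} ∪ {t ∈ J₂ | |g t| ≤ ε}) :=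
          measure_mono hcover
      _ ≤ volume ({t ∈ J₁ | |g t| ≤ ε} ∪ {t ∈ Mid | |g t| ≤ ε}) + volume {t ∈ J₂ | |g t| ≤ ε} :=
          measure_union_le _ _
      _ ≤ volume {t ∈ J₁ | |g t| ≤ ε} + volume {t ∈ Mid | |g t| ≤ ε}
            + volume {t ∈ J₂ | |g t| ≤ ε} :=
          add_le_add (measure_union_le _ _) le_rfl
      _ ≤ ENNReal.ofReal (((2:ℝ)^(j+2) - 2) * (ε/δ) ^ ((1:ℝ)/(N+1))) + ENNReal.ofReal (2*δ/c)
            + ENNReal.ofReal (((2:ℝ)^(j+2) - 2) * (ε/δ) ^ ((1:ℝ)/(N+1))) :=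
          add_le_add (add_le_add hB₁ hMidvol) hB₂
      _ = ENNReal.ofReal (((2:ℝ)^(j+2) - 2) * (ε/δ) ^ ((1:ℝ)/(N+1)) + 2*δ/c
            + ((2:ℝ)^(j+2) - 2) * (ε/δ) ^ ((1:ℝ)/(N+1))) := by
          rw [ENNReal.ofReal_add (by positivity) hA, ENNReal.ofReal_add hA (by positivity)]
      _ ≤ ENNReal.ofReal (((2:ℝ)^(j+1+2) - 2) * (ε/c) ^ ((1:ℝ)/(((j+1:ℕ):ℝ)+1))) := by
          apply ENNReal.ofReal_le_ofReal
          have hce : ((1:ℝ)/(((j+1:ℕ):ℝ)+1)) = α := by push_cast; rw [hα, hN]; ring_nf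
          rw [hce, hexp, hδc]
          have h23 : (2:ℝ)^(j+1+2) = 2 * 2^(j+2) := by
            rw [show j+1+2 = (j+2)+1 from rfl, pow_succ]; ring
          rw [h23]
          nlinarith [hxα]

/-- Measure of the set where a function with finite-order zeros is small. -/
theorem eps_measure_theorem
    (n : ℕ) (W : Set (EuclideanSpace ℝ (Fin n))) (hW : IsCompact W)
    (T : ℝ) (hT : 0 < T) (M : ℕ) (hM : 0 < M)
    (f : ℝ → EuclideanSpace ℝ (Fin n) → ℝ)
    (hsmooth : ∀ w, ContDiff ℝ (⊤ : ℕ∞) (fun t => f t w))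
    (hcont : ∀ k : ℕ,
      Continuous (fun p : ℝ × EuclideanSpace ℝ (Fin n) =>
        iteratedDeriv k (fun t => f t p.2) p.1))
    (hzeros : ∀ w ∈ W, ∀ t ∈ Icc (0:ℝ) T, f t w = 0 →
      ∃ k ≤ M, iteratedDeriv k (fun t => f t w) t ≠ 0) :
    ∃ C > (0:ℝ), ∃ ε₀ > (0:ℝ), ∀ ε : ℝ, 0 < ε → ε < ε₀ → ∀ w ∈ W,
      volume {t ∈ Icc (0:ℝ) T | |f t w| ≤ ε} ≤
        ENNReal.ofReal (C * ε ^ ((1:ℝ) / (2 * M))) := by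
  by_cases hWne : W.Nonempty
  swap
  · refine ⟨1, one_pos, 1, one_pos, fun ε _ _ w hw => ?_⟩
    rw [not_nonempty_iff_eq_empty] at hWne
    exact absurd (hWne ▸ hw) (notMem_empty w)
  obtain ⟨w₀, hw₀⟩ := hWne
  set K : Set (ℝ × EuclideanSpace ℝ (Fin n)) := Icc (0:ℝ) T ×ˢ W with hK
  have hKcomp : IsCompact K := isCompact_Icc.prod hW
  have hKne : K.Nonempty := ⟨(0, w₀), by simp [hK, hT.le, hw₀]⟩
  set G : ℝ × EuclideanSpace ℝ (Fin n) → ℝ :=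
    fun p => ∑ k ∈ Finset.range (M+1), |iteratedDeriv k (fun t => f t p.2) p.1| with hG
  have hGcont : Continuous G := continuous_finset_sum _ (fun k _ => (hcont k).abs)
  have hGpos : ∀ p ∈ K, 0 < G p := by
    intro p hp
    rcases lt_or_ge 0 (G p) with h | h
    · exact h
    exfalso
    have hterm0 : ∀ k ∈ Finset.range (M+1), |iteratedDeriv k (fun t => f t p.2) p.1| = 0 := by
      intro k hk
      have h1 : |iteratedDeriv k (fun t => f t p.2) p.1| ≤ G p :=
        Finset.single_le_sum (f := fun k => |iteratedDeriv k (fun t => f t p.2) p.1|)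
          (fun i _ => abs_nonneg _) hk
      have h2 := abs_nonneg (iteratedDeriv k (fun t => f t p.2) p.1)
      linarith
    have hf0 : f p.1 p.2 = 0 := by
      have := hterm0 0 (by simp)
      simpa [iteratedDeriv_zero] using this
    have hpIcc : p.1 ∈ Icc (0:ℝ) T := (mem_prod.1 hp).1
    have hpW : p.2 ∈ W := (mem_prod.1 hp).2
    obtain ⟨k, hkM, hkne⟩ := hzeros p.2 hpW p.1 hpIcc hf0
    exact hkne (abs_eq_zero.1 (hterm0 k (Finset.mem_range.2 (by omega))))
  obtain ⟨p₀, hp₀K, hp₀min'⟩ := hKcomp.exists_isMinOn hKne hGcont.continuousOn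
  have hp₀min : ∀ p ∈ K, G p₀ ≤ G p := fun p hp => hp₀min' hp
  set c : ℝ := G p₀ with hc
  have hcpos : 0 < c := hGpos p₀ hp₀K
  set c₁ : ℝ := c / (M+1) with hc₁
  have hc₁pos : 0 < c₁ := by positivity
  have hterm : ∀ p ∈ K, ∃ k ≤ M, c₁ ≤ |iteratedDeriv k (fun t => f t p.2) p.1| := by
    intro p hp
    by_contra hcon
    push_neg at hcon
    have hlt : G p < ∑ _k ∈ Finset.range (M+1), c₁ := by
      apply Finset.sum_lt_sum_of_nonempty (by simp)
      intro k hk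
      exact hcon k (Nat.lt_succ_iff.1 (Finset.mem_range.1 hk))
    rw [Finset.sum_const, Finset.card_range, nsmul_eq_mul] at hlt
    have : (M+1 : ℝ) * c₁ = c := by rw [hc₁]; field_simp
    have hle := hp₀min p hp
    push_cast at hlt
    linarith
  have hnbhd : ∀ p ∈ K, ∃ r > 0, ∃ k ≤ M,
      ∀ q ∈ Metric.ball p r, c₁/2 ≤ |iteratedDeriv k (fun t => f t q.2) q.1| := by
    intro p hp
    obtain ⟨k, hkM, hkc⟩ := hterm p hp
    have hopen : IsOpen {q : ℝ × EuclideanSpace ℝ (Fin n) |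
        c₁/2 < |iteratedDeriv k (fun t => f t q.2) q.1|} :=
      isOpen_lt continuous_const (hcont k).abs
    have hpmem : p ∈ {q : ℝ × EuclideanSpace ℝ (Fin n) |
        c₁/2 < |iteratedDeriv k (fun t => f t q.2) q.1|} := by
      simp only [mem_setOf_eq]; linarith
    obtain ⟨r, hr, hball⟩ := Metric.isOpen_iff.1 hopen p hpmem
    exact ⟨r, hr, k, hkM, fun q hq => (hball hq).le⟩
  choose! r hrpos k hkM hball using hnbhd
  obtain ⟨s, hsK, hscover⟩ := hKcomp.elim_nhds_subcover (fun p => Metric.ball p (r p))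
    (fun p hp => Metric.ball_mem_nhds p (hrpos p hp))
  set β : ℝ := (1:ℝ)/(2*(M:ℝ)) with hβ
  set B : ℝ := 2^(M+1) * (2/c₁) ^ β with hB
  have hBpos : 0 < B := by positivity
  refine ⟨s.card * B + 1, by positivity, c₁/2, by positivity, ?_⟩
  intro ε hε hεlt w hw
  -- the pieces
  have hJx : ∀ x : ℝ × EuclideanSpace ℝ (Fin n),
      Convex ℝ {t : ℝ | (t, w) ∈ Metric.ball x (r x)} := by
    intro x
    have hset : {t : ℝ | (t, w) ∈ Metric.ball x (r x)} =
        {t : ℝ | t ∈ Metric.ball x.1 (r x)} ∩ {t : ℝ | dist w x.2 < r x} := by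
      ext t
      simp [Metric.mem_ball, Prod.dist_eq, max_lt_iff]
    by_cases hwx : dist w x.2 < r x
    · rw [hset]
      simp only [hwx, setOf_true]
      rw [inter_univ]; exact convex_ball x.1 (r x)
    · rw [hset]
      simp only [hwx, setOf_false]
      simpa using convex_empty (𝕜 := ℝ) (E := ℝ)
  have hpiece : ∀ x ∈ s,
      volume {t ∈ {t : ℝ | (t, w) ∈ Metric.ball x (r x)} | |f t w| ≤ ε} ≤
        ENNReal.ofReal (B * ε ^ β) := by
    intro x hx
    have hxK := hsK x hx
    set Jx : Set ℝ := {t : ℝ | (t, w) ∈ Metric.ball x (r x)} with hJxdef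
    have hlowJ : ∀ t ∈ Jx, c₁/2 ≤ |iteratedDeriv (k x) (fun t => f t w) t| := by
      intro t ht
      exact hball x hxK (t, w) ht
    by_cases hk0 : k x = 0
    · rw [hk0] at hlowJ
      simp only [iteratedDeriv_zero] at hlowJ
      have : {t ∈ Jx | |f t w| ≤ ε} = ∅ := by
        ext t
        simp only [mem_setOf_eq, mem_empty_iff_false, iff_false, not_and]
        intro ht hle
        have := hlowJ t ht
        linarith
      rw [this, measure_empty]
      positivity
    obtain ⟨k', hk'⟩ := Nat.exists_eq_succ_of_ne_zero hk0
    rw [hk'] at hlowJ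
    have hkx := hkM x hxK
    have hk'M : k' + 1 ≤ M := by omega
    have hbound := sublevel_bound (fun t => f t w) (hsmooth w) k' Jx (hJx x) (c₁/2) ε
      (by positivity) hε hlowJ
    refine hbound.trans (ENNReal.ofReal_le_ofReal ?_)
    set y : ℝ := ε/(c₁/2) with hy
    have hy0 : 0 < y := by positivity
    have hy1 : y ≤ 1 := by
      rw [hy, div_le_one (by positivity)]
      linarith
    have hexp_le : β ≤ 1/((k':ℝ)+1) := by
      rw [hβ]
      apply one_div_le_one_div_of_le (by positivity)
      have h1 : (1:ℝ) ≤ (M:ℝ) := by exact_mod_cast hM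
      have h2 : ((k':ℝ)+1) ≤ (M:ℝ) := by exact_mod_cast hk'M
      linarith
    have h1 : y ^ ((1:ℝ)/((k':ℝ)+1)) ≤ y ^ β :=
      Real.rpow_le_rpow_of_exponent_ge hy0 hy1 hexp_le
    have h2 : y ^ β = (2/c₁) ^ β * ε ^ β := by
      have hyeq : y = (2/c₁) * ε := by
        rw [hy]; field_simp
      rw [hyeq, Real.mul_rpow (by positivity) hε.le]
    have h3 : (2:ℝ)^(k'+2) - 2 ≤ 2^(M+1) := by
      have : (2:ℝ)^(k'+2) ≤ 2^(M+1) := pow_le_pow_right₀ one_le_two (by omega)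
      linarith
    calc ((2:ℝ)^(k'+2) - 2) * y ^ ((1:ℝ)/((k':ℝ)+1))
        ≤ 2^(M+1) * (y ^ β) := by
          apply mul_le_mul h3 h1 (by positivity) (by positivity)
      _ = B * ε ^ β := by rw [h2, hB]; ring
  -- covering and summation
  have hcover_w : {t ∈ Icc (0:ℝ) T | |f t w| ≤ ε} ⊆
      ⋃ x ∈ s, {t ∈ {t : ℝ | (t, w) ∈ Metric.ball x (r x)} | |f t w| ≤ ε} := by
    intro t ht
    have htK : (t, w) ∈ K := by
      rw [hK, mem_prod]
      exact ⟨ht.1, hw⟩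
    obtain ⟨x, hx, hmem⟩ := mem_iUnion₂.1 (hscover htK)
    exact mem_iUnion₂.2 ⟨x, hx, hmem, ht.2⟩
  calc volume {t ∈ Icc (0:ℝ) T | |f t w| ≤ ε}
      ≤ volume (⋃ x ∈ s, {t ∈ {t : ℝ | (t, w) ∈ Metric.ball x (r x)} | |f t w| ≤ ε}) :=
        measure_mono hcover_w
    _ ≤ ∑ x ∈ s, volume {t ∈ {t : ℝ | (t, w) ∈ Metric.ball x (r x)} | |f t w| ≤ ε} :=
        measure_biUnion_finset_le s _
    _ ≤ ∑ _x ∈ s, ENNReal.ofReal (B * ε ^ β) := Finset.sum_le_sum hpiece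
    _ = s.card • ENNReal.ofReal (B * ε ^ β) := by rw [Finset.sum_const]
    _ = ENNReal.ofReal ((s.card : ℝ) * (B * ε ^ β)) := by
        rw [nsmul_eq_mul, ← ENNReal.ofReal_natCast s.card,
          ← ENNReal.ofReal_mul (Nat.cast_nonneg _)]
    _ ≤ ENNReal.ofReal (((s.card : ℝ) * B + 1) * ε ^ ((1:ℝ)/(2*(M:ℝ)))) := by
        apply ENNReal.ofReal_le_ofReal
        rw [hβ]
        have hεβ : 0 ≤ ε ^ ((1:ℝ)/(2*(M:ℝ))) := Real.rpow_nonneg hε.le _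
        nlinarith
end

section
/- Let f : [0,T] → ℝ be smooth on [0,T], and suppose M ∈ ℕ is such that for every t ∈ [0,T] there exists k with 0 ≤ k ≤ M and the k-th derivative f⁽ᵏ⁾(t) ≠ 0. Then f has only finitely many zeros in [0,T]. -/
open Set Filter Topology

/-- A smooth function on [0,T] whose zeros all have finite order at most M
has only finitely many zeros in [0,T]. -/
theorem finitely_many_zeros_of_finite_order
    (T : ℝ) (hT : 0 < T) (M : ℕ)
    (f : ℝ → ℝ) (hf : ContDiff ℝ (⊤ : ℕ∞) f)
    (horder : ∀ t ∈ Icc (0:ℝ) T, ∃ k ≤ M, iteratedDeriv k f t ≠ 0) :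
    {t ∈ Icc (0:ℝ) T | f t = 0}.Finite := by
  have hf' : ContDiff ℝ (⊤ : ℕ∞) f := hf.of_le (by simp)
  have hsmooth : ∀ k : ℕ, Continuous (iteratedDeriv k f) := by
    intro k
    rw [iteratedDeriv_eq_iterate]
    exact (hf'.iterate_deriv k).continuous
  by_contra hinf
  obtain ⟨t₀, ht₀, hacc⟩ := Set.Infinite.exists_accPt_of_subset_isCompact hinf isCompact_Icc
    (fun x hx => hx.1)
  rw [accPt_iff_nhds] at hacc
  have key : ∀ k : ℕ, ∃ u : ℕ → ℝ,
      (∀ n, u n ≠ t₀ ∧ iteratedDeriv k f (u n) = 0) ∧ Tendsto u atTop (𝓝 t₀) := by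
    intro k
    induction k with
    | zero =>
      have h : ∀ n : ℕ, ∃ y, y ≠ t₀ ∧ f y = 0 ∧ dist y t₀ < 1 / (n + 1) := by
        intro n
        obtain ⟨y, ⟨hy1, hy2⟩, hy3⟩ := hacc (Metric.ball t₀ (1 / (n + 1)))
          (Metric.ball_mem_nhds t₀ (by positivity))
        exact ⟨y, hy3, hy2.2, by simpa [Metric.mem_ball] using hy1⟩
      choose u h1 h2 h3 using h
      refine ⟨u, fun n => ⟨h1 n, by simpa using h2 n⟩, ?_⟩
      rw [tendsto_iff_dist_tendsto_zero]
      exact squeeze_zero (fun n => dist_nonneg) (fun n => (h3 n).le)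
        tendsto_one_div_add_atTop_nhds_zero_nat
    | succ k ih =>
      obtain ⟨u, hu, hconv⟩ := ih
      set g := iteratedDeriv k f with hg
      have hgt₀ : g t₀ = 0 := by
        have h1 : Tendsto (fun n => g (u n)) atTop (𝓝 (g t₀)) :=
          ((hsmooth k).continuousAt.tendsto).comp hconv
        have h2 : (fun n => g (u n)) = fun _ => (0 : ℝ) := funext fun n => (hu n).2
        rw [h2] at h1
        exact tendsto_nhds_unique h1 tendsto_const_nhds
      have h : ∀ n : ℕ, ∃ c, c ≠ t₀ ∧ deriv g c = 0 ∧ dist c t₀ ≤ dist (u n) t₀ := by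
        intro n
        obtain ⟨hne, hz⟩ := hu n
        rcases hne.lt_or_gt with hlt | hlt
        · obtain ⟨c, hc, hc0⟩ := exists_deriv_eq_zero hlt
            ((hsmooth k).continuousOn) (by exact hz.trans hgt₀.symm)
          refine ⟨c, hc.2.ne, hc0, ?_⟩
          have := Real.dist_le_of_mem_Icc (x := c) (y := t₀)
            ⟨hc.1.le, hc.2.le⟩ ⟨le_refl t₀ |>.trans (le_refl _) |>.trans_eq rfl |>.trans' hlt.le, le_refl _⟩
          calc dist c t₀ ≤ t₀ - u n := this
            _ = dist (u n) t₀ := by rw [Real.dist_eq, abs_sub_comm, abs_of_nonneg (by linarith)]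
        · obtain ⟨c, hc, hc0⟩ := exists_deriv_eq_zero hlt
            ((hsmooth k).continuousOn) (by exact hgt₀.trans hz.symm)
          refine ⟨c, hc.1.ne', hc0, ?_⟩
          have := Real.dist_le_of_mem_Icc (x := c) (y := t₀)
            ⟨hc.1.le, hc.2.le⟩ ⟨le_refl _, hlt.le⟩
          calc dist c t₀ ≤ u n - t₀ := this
            _ = dist (u n) t₀ := by rw [Real.dist_eq, abs_of_nonneg (by linarith)]
      choose c h1 h2 h3 using h
      refine ⟨c, fun n => ⟨h1 n, by rw [iteratedDeriv_succ]; exact h2 n⟩, ?_⟩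
      rw [tendsto_iff_dist_tendsto_zero]
      exact squeeze_zero (fun n => dist_nonneg) h3
        (tendsto_iff_dist_tendsto_zero.mp hconv)
  obtain ⟨k, hk, hne⟩ := horder t₀ ht₀
  obtain ⟨u, hu, hconv⟩ := key k
  have h1 : Tendsto (fun n => iteratedDeriv k f (u n)) atTop (𝓝 (iteratedDeriv k f t₀)) :=
    ((hsmooth k).continuousAt.tendsto).comp hconv
  have h2 : (fun n => iteratedDeriv k f (u n)) = fun _ => (0 : ℝ) := funext fun n => (hu n).2
  rw [h2] at h1
  exact hne (tendsto_nhds_unique tendsto_const_nhds h1).symm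
end

section
/- Let a, b : ℝⁿ × (ℝⁿ \ {0}) → ℝ be smooth and positively homogeneous of degree 1 in ξ. Suppose at every point (x,ξ) with |ξ| = 1 where a(x,ξ) = b(x,ξ), some iterated Poisson bracket H_a^λ b(x,ξ) = {a,{a,…{a,b}…}} (λ brackets, λ ≤ M) is nonzero. Then along any integral curve t ↦ Φ_a^t(x₀,ξ₀) of the Hamiltonian flow of a, the function f(t) = (a − b)(Φ_a^t(x₀,ξ₀)) satisfies: at any zero t* of f, some derivative f^{(λ)}(t*) with 1 ≤ λ ≤ M is nonzero; in particular f has zeros of order at most M. -/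
open Set

set_option linter.unusedSectionVars false
set_option linter.unusedVariables false

noncomputable section

variable {E : Type*} [NormedAddCommGroup E] [InnerProductSpace ℝ E] [CompleteSpace E]

/-- The Poisson bracket {g, f} on T*ℝⁿ ≅ E × E (x the first factor,
ξ the second): {g,f} = ⟨∇_ξ g, ∇_x f⟩ − ⟨∇_x g, ∇_ξ f⟩. -/
def poissonBracket (g f : E × E → ℝ) (p : E × E) : ℝ :=
  inner ℝ (gradient (fun ξ => g (p.1, ξ)) p.2) (gradient (fun x => f (x, p.2)) p.1) -
    inner ℝ (gradient (fun x => g (x, p.2)) p.1) (gradient (fun ξ => f (p.1, ξ)) p.2)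

/-- The iterated Poisson bracket H_a^λ b = {a,{a,…{a,b}…}} (λ brackets). -/
def iterPoissonBracket (a b : E × E → ℝ) : ℕ → E × E → ℝ
  | 0 => b
  | l + 1 => poissonBracket a (iterPoissonBracket a b l)

namespace CondCAux

open ContinuousLinearMap InnerProductSpace

lemma isOpenU : IsOpen {p : E × E | p.2 ≠ 0} :=
  isOpen_compl_singleton.preimage continuous_snd

lemma diffAt {c : E × E → ℝ} (hc : ContDiffOn ℝ (⊤ : ℕ∞) c {p : E × E | p.2 ≠ 0})
    {p : E × E} (hp : p.2 ≠ 0) : DifferentiableAt ℝ c p :=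
  ((hc.differentiableOn (by simp)).differentiableAt (isOpenU.mem_nhds hp))

lemma hasFDerivX {c : E × E → ℝ} {p : E × E} (hc : DifferentiableAt ℝ c p) :
    HasFDerivAt (fun x => c (x, p.2)) ((fderiv ℝ c p).comp (inl ℝ E E)) p.1 := by
  have h := hc.hasFDerivAt.comp p.1 (hasFDerivAt_prodMk_left (𝕜 := ℝ) p.1 p.2)
  exact h

lemma hasFDerivXi {c : E × E → ℝ} {p : E × E} (hc : DifferentiableAt ℝ c p) :
    HasFDerivAt (fun ξ => c (p.1, ξ)) ((fderiv ℝ c p).comp (inr ℝ E E)) p.2 := by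
  have h := hc.hasFDerivAt.comp p.2 (hasFDerivAt_prodMk_right (𝕜 := ℝ) p.1 p.2)
  exact h

lemma gradX_eq {c : E × E → ℝ} {p : E × E} (hc : DifferentiableAt ℝ c p) :
    gradient (fun x => c (x, p.2)) p.1
      = (toDual ℝ E).symm ((fderiv ℝ c p).comp (inl ℝ E E)) :=
  (hasFDerivX hc).hasGradientAt.gradient

lemma gradXi_eq {c : E × E → ℝ} {p : E × E} (hc : DifferentiableAt ℝ c p) :
    gradient (fun ξ => c (p.1, ξ)) p.2
      = (toDual ℝ E).symm ((fderiv ℝ c p).comp (inr ℝ E E)) :=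
  (hasFDerivXi hc).hasGradientAt.gradient

lemma inner_gradX {c : E × E → ℝ} {p : E × E} (hc : DifferentiableAt ℝ c p) (v : E) :
    (inner ℝ (gradient (fun x => c (x, p.2)) p.1) v : ℝ) = fderiv ℝ c p (v, 0) := by
  rw [gradX_eq hc, toDual_symm_apply]
  simp

lemma inner_gradXi {c : E × E → ℝ} {p : E × E} (hc : DifferentiableAt ℝ c p) (v : E) :
    (inner ℝ (gradient (fun ξ => c (p.1, ξ)) p.2) v : ℝ) = fderiv ℝ c p (0, v) := by
  rw [gradXi_eq hc, toDual_symm_apply]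
  simp

/-- Smoothness of the partial x-gradient. -/
lemma contDiffOn_gradX {c : E × E → ℝ} (hc : ContDiffOn ℝ (⊤ : ℕ∞) c {p : E × E | p.2 ≠ 0}) :
    ContDiffOn ℝ (⊤ : ℕ∞) (fun p : E × E => gradient (fun x => c (x, p.2)) p.1)
      {p : E × E | p.2 ≠ 0} := by
  have h1 : ContDiffOn ℝ (⊤ : ℕ∞) (fderiv ℝ c) {p : E × E | p.2 ≠ 0} :=
    hc.fderiv_of_isOpen isOpenU (by simp)
  set M : ((E × E) →L[ℝ] ℝ) →L[ℝ] E :=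
    ((toDual ℝ E).symm.toContinuousLinearEquiv.toContinuousLinearMap).comp
      ((compL ℝ E (E × E) ℝ).flip (inl ℝ E E)) with hM
  refine (M.contDiff.comp_contDiffOn h1).congr fun p hp => ?_
  rw [gradX_eq (diffAt hc hp)]
  simp [hM, Function.comp]

/-- Smoothness of the partial ξ-gradient. -/
lemma contDiffOn_gradXi {c : E × E → ℝ} (hc : ContDiffOn ℝ (⊤ : ℕ∞) c {p : E × E | p.2 ≠ 0}) :
    ContDiffOn ℝ (⊤ : ℕ∞) (fun p : E × E => gradient (fun ξ => c (p.1, ξ)) p.2)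
      {p : E × E | p.2 ≠ 0} := by
  have h1 : ContDiffOn ℝ (⊤ : ℕ∞) (fderiv ℝ c) {p : E × E | p.2 ≠ 0} :=
    hc.fderiv_of_isOpen isOpenU (by simp)
  set M : ((E × E) →L[ℝ] ℝ) →L[ℝ] E :=
    ((toDual ℝ E).symm.toContinuousLinearEquiv.toContinuousLinearMap).comp
      ((compL ℝ E (E × E) ℝ).flip (inr ℝ E E)) with hM
  refine (M.contDiff.comp_contDiffOn h1).congr fun p hp => ?_
  rw [gradXi_eq (diffAt hc hp)]
  simp [hM, Function.comp]

lemma contDiffOn_pb {a c : E × E → ℝ} (ha : ContDiffOn ℝ (⊤ : ℕ∞) a {p : E × E | p.2 ≠ 0})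
    (hc : ContDiffOn ℝ (⊤ : ℕ∞) c {p : E × E | p.2 ≠ 0}) :
    ContDiffOn ℝ (⊤ : ℕ∞) (poissonBracket a c) {p : E × E | p.2 ≠ 0} := by
  unfold poissonBracket
  exact ((contDiffOn_gradXi ha).inner ℝ (contDiffOn_gradX hc)).sub
    ((contDiffOn_gradX ha).inner ℝ (contDiffOn_gradXi hc))

lemma pb_self {a : E × E → ℝ} (p : E × E) : poissonBracket a a p = 0 := by
  unfold poissonBracket
  rw [real_inner_comm]
  ring

/-- The chain rule along the Hamiltonian flow. -/
lemma flow_hasDerivAt {a c : E × E → ℝ}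
    (ha : ContDiffOn ℝ (⊤ : ℕ∞) a {p : E × E | p.2 ≠ 0})
    (hc : ContDiffOn ℝ (⊤ : ℕ∞) c {p : E × E | p.2 ≠ 0})
    (γ : ℝ → E × E) (hξ : ∀ t, (γ t).2 ≠ 0)
    (hflow : ∀ t, HasDerivAt γ
      (gradient (fun ξ => a ((γ t).1, ξ)) (γ t).2,
        -gradient (fun x => a (x, (γ t).2)) (γ t).1) t) (t : ℝ) :
    HasDerivAt (fun t => c (γ t)) (poissonBracket a c (γ t)) t := by
  have hpc : DifferentiableAt ℝ c (γ t) := diffAt hc (hξ t)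
  have h := hpc.hasFDerivAt.comp_hasDerivAt t (hflow t)
  refine h.congr_deriv ?_
  set v1 := gradient (fun ξ => a ((γ t).1, ξ)) (γ t).2 with hv1
  set v2 := gradient (fun x => a (x, (γ t).2)) (γ t).1 with hv2
  have hsplit : ((v1, -v2) : E × E) = (v1, 0) + (0, -v2) := by simp
  rw [hsplit, map_add, ← inner_gradX hpc v1, ← inner_gradXi hpc (-v2)]
  unfold poissonBracket
  rw [inner_neg_right, real_inner_comm v1, real_inner_comm v2]
  ring

/-- Homogeneity of the partial ξ-gradient. -/
lemma gradXi_homog {c : E × E → ℝ} (hc : ContDiffOn ℝ (⊤ : ℕ∞) c {p : E × E | p.2 ≠ 0})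
    (hhom : ∀ s : ℝ, 0 < s → ∀ x ξ : E, ξ ≠ 0 → c (x, s • ξ) = s * c (x, ξ))
    {s : ℝ} (hs : 0 < s) (x : E) {ξ : E} (hξ : ξ ≠ 0) :
    gradient (fun η => c (x, η)) (s • ξ) = gradient (fun η => c (x, η)) ξ := by
  have hsξ : s • ξ ≠ 0 := smul_ne_zero (ne_of_gt hs) hξ
  set g : E → ℝ := fun η => c (x, η) with hg
  have hgdiff : ∀ η : E, η ≠ 0 → DifferentiableAt ℝ g η := fun η hη =>
    (hasFDerivXi (diffAt hc (p := (x, η)) hη)).differentiableAt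
  have hgs : HasFDerivAt g (fderiv ℝ g (s • ξ)) (s • ξ) := (hgdiff _ hsξ).hasFDerivAt
  have hscale : HasFDerivAt (fun η : E => s • η) (s • ContinuousLinearMap.id ℝ E) ξ :=
    (hasFDerivAt_id ξ).const_smul s
  have hG : HasFDerivAt (fun η => g (s • η))
      ((fderiv ℝ g (s • ξ)).comp (s • ContinuousLinearMap.id ℝ E)) ξ :=
    hgs.comp ξ hscale
  have hEq : (fun η => s * g η) =ᶠ[nhds ξ] (fun η => g (s • η)) := by
    filter_upwards [isOpen_compl_singleton.mem_nhds hξ] with η hη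
    exact (hhom s hs x η hη).symm
  have hG2 : HasFDerivAt (fun η => s * g η)
      ((fderiv ℝ g (s • ξ)).comp (s • ContinuousLinearMap.id ℝ E)) ξ :=
    hG.congr_of_eventuallyEq hEq
  have hG3 : HasFDerivAt (fun η => s * g η) (s • fderiv ℝ g ξ) ξ :=
    (hgdiff ξ hξ).hasFDerivAt.const_mul s
  have huniq := hG2.unique hG3
  have hfd : fderiv ℝ g (s • ξ) = fderiv ℝ g ξ := by
    ext v
    have h1 := congrFun (congrArg DFunLike.coe huniq) v
    simp only [ContinuousLinearMap.coe_comp', Function.comp_apply,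
      ContinuousLinearMap.coe_smul', Pi.smul_apply, ContinuousLinearMap.coe_id', id_eq,
      smul_eq_mul] at h1
    have h2 : fderiv ℝ g (s • ξ) (s • v) = s * fderiv ℝ g (s • ξ) v := by
      rw [map_smul]; simp
    rw [h2] at h1
    exact mul_left_cancel₀ (ne_of_gt hs) h1
  unfold gradient
  rw [hfd]

/-- Homogeneity of the partial x-gradient. -/
lemma gradX_homog {c : E × E → ℝ} (hc : ContDiffOn ℝ (⊤ : ℕ∞) c {p : E × E | p.2 ≠ 0})
    (hhom : ∀ s : ℝ, 0 < s → ∀ x ξ : E, ξ ≠ 0 → c (x, s • ξ) = s * c (x, ξ))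
    {s : ℝ} (hs : 0 < s) (x : E) {ξ : E} (hξ : ξ ≠ 0) :
    gradient (fun y => c (y, s • ξ)) x = s • gradient (fun y => c (y, ξ)) x := by
  have hd : DifferentiableAt ℝ (fun y => c (y, ξ)) x :=
    (hasFDerivX (diffAt hc (p := (x, ξ)) hξ)).differentiableAt
  have h1 : HasFDerivAt (fun y => s * c (y, ξ)) (s • fderiv ℝ (fun y => c (y, ξ)) x) x :=
    hd.hasFDerivAt.const_mul s
  have heq : (fun y => c (y, s • ξ)) = fun y => s * c (y, ξ) :=
    funext fun y => hhom s hs y ξ hξ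
  rw [heq, h1.hasGradientAt.gradient, map_smul]
  rfl

/-- Homogeneity of the Poisson bracket. -/
lemma pb_homog {a c : E × E → ℝ}
    (ha : ContDiffOn ℝ (⊤ : ℕ∞) a {p : E × E | p.2 ≠ 0})
    (hahom : ∀ s : ℝ, 0 < s → ∀ x ξ : E, ξ ≠ 0 → a (x, s • ξ) = s * a (x, ξ))
    (hc : ContDiffOn ℝ (⊤ : ℕ∞) c {p : E × E | p.2 ≠ 0})
    (hchom : ∀ s : ℝ, 0 < s → ∀ x ξ : E, ξ ≠ 0 → c (x, s • ξ) = s * c (x, ξ))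
    (s : ℝ) (hs : 0 < s) (x : E) (ξ : E) (hξ : ξ ≠ 0) :
    poissonBracket a c (x, s • ξ) = s * poissonBracket a c (x, ξ) := by
  unfold poissonBracket
  simp only
  rw [gradXi_homog ha hahom hs x hξ, gradXi_homog hc hchom hs x hξ,
    gradX_homog ha hahom hs x hξ, gradX_homog hc hchom hs x hξ,
    real_inner_smul_right, real_inner_smul_left]
  ring

end CondCAux

open CondCAux in
/-- Condition C translates into finite-order vanishing of a − b along the
bicharacteristics of a. -/
theorem condition_C_finite_order_along_flow
    (a b : E × E → ℝ) (M : ℕ) (hM : 0 < M)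
    (ha : ContDiffOn ℝ (⊤ : ℕ∞) a {p : E × E | p.2 ≠ 0})
    (hb : ContDiffOn ℝ (⊤ : ℕ∞) b {p : E × E | p.2 ≠ 0})
    (hahom : ∀ c : ℝ, 0 < c → ∀ x ξ : E, a (x, c • ξ) = c * a (x, ξ))
    (hbhom : ∀ c : ℝ, 0 < c → ∀ x ξ : E, b (x, c • ξ) = c * b (x, ξ))
    (hC : ∀ p : E × E, ‖p.2‖ = 1 → a p = b p →
      ∃ l : ℕ, 1 ≤ l ∧ l ≤ M ∧ iterPoissonBracket a b l p ≠ 0)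
    (x₀ ξ₀ : E) (hξ₀ : ξ₀ ≠ 0)
    (γ : ℝ → E × E) (hγ0 : γ 0 = (x₀, ξ₀))
    (hξ : ∀ t, (γ t).2 ≠ 0)
    (hflow : ∀ t, HasDerivAt γ
      (gradient (fun ξ => a ((γ t).1, ξ)) (γ t).2,
        -gradient (fun x => a (x, (γ t).2)) (γ t).1) t) :
    ∀ tstar : ℝ, a (γ tstar) - b (γ tstar) = 0 →
      ∃ l : ℕ, 1 ≤ l ∧ l ≤ M ∧
        iteratedDeriv l (fun t => a (γ t) - b (γ t)) tstar ≠ 0 := by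
  intro tstar hts
  have hahom' : ∀ s : ℝ, 0 < s → ∀ x ξ : E, ξ ≠ 0 → a (x, s • ξ) = s * a (x, ξ) :=
    fun s hs x ξ _ => hahom s hs x ξ
  -- smoothness of all iterated brackets
  have hiter : ∀ l, ContDiffOn ℝ (⊤ : ℕ∞) (iterPoissonBracket a b l) {p : E × E | p.2 ≠ 0} := by
    intro l
    induction l with
    | zero => exact hb
    | succ n ih => exact contDiffOn_pb ha ih
  -- homogeneity of all iterated brackets
  have hiterhom : ∀ l, ∀ s : ℝ, 0 < s → ∀ x ξ : E, ξ ≠ 0 →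
      iterPoissonBracket a b l (x, s • ξ) = s * iterPoissonBracket a b l (x, ξ) := by
    intro l
    induction l with
    | zero => exact fun s hs x ξ _ => hbhom s hs x ξ
    | succ n ih =>
        intro s hs x ξ hξ'
        simp only [iterPoissonBracket]
        exact pb_homog ha hahom' (hiter n) ih s hs x ξ hξ'
  -- the iterated-derivative formula along the flow
  have hDeriv : ∀ l, 1 ≤ l → iteratedDeriv l (fun t => a (γ t) - b (γ t))
      = fun t => -(iterPoissonBracket a b l (γ t)) := by
    intro l hl
    induction l with
    | zero => omega
    | succ n ih =>
      rcases Nat.eq_zero_or_pos n with hn | hn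
      · subst hn
        funext t
        rw [iteratedDeriv_one]
        have h := ((flow_hasDerivAt ha ha γ hξ hflow t).sub
          (flow_hasDerivAt ha hb γ hξ hflow t))
        rw [show deriv (fun t => a (γ t) - b (γ t)) t = _ from h.deriv, pb_self]
        show 0 - poissonBracket a b (γ t) = -(poissonBracket a (iterPoissonBracket a b 0) (γ t))
        unfold iterPoissonBracket
        ring
      · rw [iteratedDeriv_succ, ih hn]
        funext t
        have h := (flow_hasDerivAt ha (hiter n) γ hξ hflow t).neg
        rw [show deriv (fun t => -iterPoissonBracket a b n (γ t)) t = _ from h.deriv]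
        rfl
  -- normalize the point via homogeneity and apply condition C
  set p := γ tstar with hp
  have hξp : p.2 ≠ 0 := hξ tstar
  set s : ℝ := ‖p.2‖ with hsdef
  have hs : 0 < s := norm_pos_iff.mpr hξp
  set η : E := s⁻¹ • p.2 with hη
  have hηne : η ≠ 0 := smul_ne_zero (inv_ne_zero (ne_of_gt hs)) hξp
  have hηnorm : ‖η‖ = 1 := by
    rw [hη, norm_smul, norm_inv, norm_norm]
    field_simp
  have hsη : s • η = p.2 := smul_inv_smul₀ (ne_of_gt hs) p.2
  have hpeq : ((p.1, s • η) : E × E) = p := by rw [hsη]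
  have hab : a (p.1, η) = b (p.1, η) := by
    have h1 : a (p.1, s • η) = s * a (p.1, η) := hahom s hs p.1 η
    have h2 : b (p.1, s • η) = s * b (p.1, η) := hbhom s hs p.1 η
    rw [hpeq] at h1 h2
    have : a p = b p := by linarith [sub_eq_zero.mp hts]
    rw [this] at h1
    exact mul_left_cancel₀ (ne_of_gt hs) (h1.symm.trans h2)
  obtain ⟨l, hl1, hlM, hne⟩ := hC (p.1, η) hηnorm hab
  refine ⟨l, hl1, hlM, ?_⟩
  rw [hDeriv l hl1]
  have hval : iterPoissonBracket a b l p ≠ 0 := by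
    rw [← hpeq, hiterhom l s hs p.1 η hηne]
    exact mul_ne_zero (ne_of_gt hs) hne
  simpa using hval

end
end
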